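/- arXiv:quant-ph/0411073 — 6 statements merged into one kernel-verified Lean document; each statement's English description precedes it below -/
import Mathlib

section
/- Let V be a real symmetric d×d matrix and W a complex Hermitian d×d matrix (with real part Re W and imaginary part Im W). If V ≥ W in the Loewner (positive semidefinite) order, then tr V ≥ tr(Re W) + tr |Im W|, where |Im W| denotes the absolute value (positive square root of (Im W)² ) of the Hermitian matrix i·Im W (equivalently, the sum of absolute values of the eigenvalues of the real antisymmetric matrix Im W interpreted as an imaginary Hermitian matrix). -/
/-!
Write `W = Re W + J` with `J = i · Im W` and put `P = V - Re W`. The hypothesis says `P - J ≥ 0`;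
since `V` is real symmetric and `Wᵀ = W̄`, its transpose is `P + J ≥ 0`. So `-P ≤ J ≤ P`, and in an
eigenbasis of `J` the diagonal entries of `P` dominate the absolute values of the eigenvalues of
`J`; summing them gives `tr |J| ≤ tr P = tr V - tr (Re W)`.
-/

open ComplexOrder Matrix

theorem Matrix.abs_re_apply_self_le_of_posSemidef {n 𝕜 : Type*} [RCLike 𝕜] {C M : Matrix n n 𝕜}
    (h₁ : (C - M).PosSemidef) (h₂ : (C + M).PosSemidef) (i : n) :
    |RCLike.re (M i i)| ≤ RCLike.re (C i i) := by
  have e₁ := RCLike.re_nonneg_of_nonneg (h₁.isHermitian.apply i i) |>.mpr h₁.diag_nonneg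
  have e₂ := RCLike.re_nonneg_of_nonneg (h₂.isHermitian.apply i i) |>.mpr h₂.diag_nonneg
  simp only [sub_apply, add_apply, map_sub, map_add] at e₁ e₂
  exact abs_le.mpr ⟨by linarith, by linarith⟩

theorem Matrix.IsHermitian.sum_abs_eigenvalues_le_re_trace {n 𝕜 : Type*} [Fintype n] [DecidableEq n]
    [RCLike 𝕜] {M P : Matrix n n 𝕜}
    (hM : M.IsHermitian) (h₁ : (P - M).PosSemidef) (h₂ : (P + M).PosSemidef) :
    ∑ i, |hM.eigenvalues i| ≤ RCLike.re P.trace := by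
  have hdiag := hM.conjStarAlgAut_star_eigenvectorUnitary
  rw [Unitary.conjStarAlgAut_star_apply, star_eq_conjTranspose] at hdiag
  have hunit := Unitary.mul_star_self_of_mem hM.eigenvectorUnitary.2
  set U : Matrix n n 𝕜 := (hM.eigenvectorUnitary : Matrix n n 𝕜)
  have hconj {A : Matrix n n 𝕜} (hA : A.PosSemidef) : (Uᴴ * A * U).PosSemidef :=
    hA.conjTranspose_mul_mul_same U
  have h₁' := hconj h₁
  have h₂' := hconj h₂
  rw [mul_sub, sub_mul, hdiag] at h₁'
  rw [mul_add, add_mul, hdiag] at h₂'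
  have htrace : (Uᴴ * P * U).trace = P.trace := by
    rw [trace_mul_cycle, ← star_eq_conjTranspose, hunit, one_mul]
  calc ∑ i, |hM.eigenvalues i|
      ≤ ∑ i, RCLike.re ((Uᴴ * P * U) i i) := Finset.sum_le_sum fun i _ => by
        simpa using abs_re_apply_self_le_of_posSemidef h₁' h₂' i
    _ = RCLike.re P.trace := by rw [← htrace, trace, map_sum]; rfl

/-- If a real symmetric matrix `V` dominates a complex Hermitian matrix `W` in the
Loewner order, then `tr V ≥ tr (Re W) + tr |Im W|`, where `tr |Im W|` is the sum of
the absolute values of the eigenvalues of the Hermitian matrix `i · Im W`. -/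
theorem stmt_0 {d : ℕ} (V : Matrix (Fin d) (Fin d) ℝ) (hV : V.IsSymm)
    (W : Matrix (Fin d) (Fin d) ℂ) (hW : W.IsHermitian)
    (hIm : (Complex.I • (Matrix.of fun i j => (((W i j).im : ℝ) : ℂ))).IsHermitian)
    (hle : (V.map (fun x => (x : ℂ)) - W).PosSemidef) :
    (∑ i, (W i i).re) + (∑ i, |hIm.eigenvalues i|) ≤ V.trace := by
  set J := Complex.I • (Matrix.of fun i j => (((W i j).im : ℝ) : ℂ))
  set P := V.map (fun x => (x : ℂ)) - W.map (fun z => (z.re : ℂ))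
  have hsub : V.map (fun x => (x : ℂ)) - W = P - J := by
    ext i j
    simp [P, J, Complex.ext_iff]
  have hadd : (V.map (fun x => (x : ℂ)) - W)ᵀ = P + J := by
    ext i j
    simp [P, J, Complex.ext_iff, hV.apply i j, ← hW.apply i j]
  have hbound := hIm.sum_abs_eigenvalues_le_re_trace (hsub ▸ hle) (hadd ▸ hle.transpose)
  have htrace : RCLike.re P.trace = V.trace - ∑ i, (W i i).re := by
    simp [P, trace, Complex.re_sum]
  linarith
end

section
/- For a 2×2 positive definite real symmetric matrix G with entries g₁, g₂ (off-diagonal), g₃, and real parameters r ∈ (0,1), φ ∈ [0,π/2], the function f(t,s) = tr G + g₁(t + (g₂/g₁)s)² + (det G / g₁)·s² + 2r·|cos φ − s·sin φ|·√(det G) over (t,s) ∈ ℝ² attains its minimum value: (a) tr G + 2r cos φ √(det G) − r² sin²φ · g₁, achieved at t = −(g₂/g₁)s, s = r g₁ sin φ/√(det G), provided g₁/√(det G) < cos φ/(r sin²φ); (b) tr G + (det G/g₁)(cos φ/sin φ)², achieved at t = −(g₂/g₁)s, s = cos φ/sin φ, otherwise (assuming sin φ ≠ 0). -/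
/-!
Completing the square in `t` leaves `tr G + g₁ (t + (g₂/g₁) s)² + h s` with
`h s = a s² + b |c - s σ|`, `a = det G / g₁`, `b = 2 r √(det G)`, `c = cos φ`, `σ = sin φ`.
The convex function `h` is minimised either at the vertex `s = b σ / (2a)` of the branch
`a s² + b (c - s σ)`, when that vertex lies left of the kink `s = c / σ`, or at the kink itself.
-/

open Real

section QuadraticPlusAbs

variable {a b c σ : ℝ}

theorem vertex_value_le_mul_sq_add_mul_abs (ha : 0 < a) (hb : 0 ≤ b) (s : ℝ) :
    b * c - b ^ 2 * σ ^ 2 / (4 * a) ≤ a * s ^ 2 + b * |c - s * σ| := by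
  have hvertex : b * c - b ^ 2 * σ ^ 2 / (4 * a) + a * (s - b * σ / (2 * a)) ^ 2
      = a * s ^ 2 + b * (c - s * σ) := by
    field_simp
    ring
  linarith [mul_le_mul_of_nonneg_left (le_abs_self (c - s * σ)) hb,
    mul_nonneg ha.le (sq_nonneg (s - b * σ / (2 * a)))]

theorem mul_sq_add_mul_abs_of_vertex {s : ℝ} (ha : a ≠ 0) (hs : 2 * a * s = b * σ)
    (hsc : s * σ ≤ c) : a * s ^ 2 + b * |c - s * σ| = b * c - b ^ 2 * σ ^ 2 / (4 * a) := by
  rw [abs_of_nonneg (sub_nonneg.mpr hsc)]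
  field_simp
  linear_combination (2 * a * s - b * σ) * hs

/-- The subgradient condition `|2 a u| ≤ b σ` at the kink `u = c / σ`, multiplied by `σ`. -/
theorem kink_value_le_mul_sq_add_mul_abs (ha : 0 ≤ a) (hσ : 0 < σ) (hkink : |2 * a * c| ≤ b * σ ^ 2)
    (s : ℝ) : a * (c / σ) ^ 2 ≤ a * s ^ 2 + b * |c - s * σ| := by
  have hexpand : (a * s ^ 2 + b * |c - s * σ| - a * (c / σ) ^ 2) * σ ^ 2
      = a * (s * σ - c) ^ 2 + 2 * a * c * (s * σ - c) + b * σ ^ 2 * |s * σ - c| := by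
    rw [abs_sub_comm]
    field_simp
    ring
  have hcross : -(2 * a * c * (s * σ - c)) ≤ b * σ ^ 2 * |s * σ - c| := by
    calc -(2 * a * c * (s * σ - c)) ≤ |2 * a * c| * |s * σ - c| := by
          rw [← abs_mul]; exact neg_le_abs _
      _ ≤ b * σ ^ 2 * |s * σ - c| := by gcongr
  have hscaled : 0 ≤ (a * s ^ 2 + b * |c - s * σ| - a * (c / σ) ^ 2) * σ ^ 2 := by
    rw [hexpand]; linarith [mul_nonneg ha (sq_nonneg (s * σ - c))]
  linarith [(mul_nonneg_iff_of_pos_right (pow_pos hσ 2)).mp hscaled]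

theorem mul_sq_add_mul_abs_at_kink (hσ : σ ≠ 0) :
    a * (c / σ) ^ 2 + b * |c - c / σ * σ| = a * (c / σ) ^ 2 := by
  rw [div_mul_cancel₀ c hσ, sub_self, abs_zero, mul_zero, add_zero]

end QuadraticPlusAbs

theorem isLeast_range_of_eq_add_sq {F : ℝ → ℝ → ℝ} {h : ℝ → ℝ} {C α β m s₀ : ℝ}
    (hF : ∀ t s, F t s = C + α * (t + β * s) ^ 2 + h s) (hα : 0 ≤ α)
    (hm : ∀ s, m ≤ h s) (hs₀ : h s₀ = m) :
    IsLeast (Set.range fun p : ℝ × ℝ => F p.1 p.2) (C + m) ∧ F (-β * s₀) s₀ = C + m := by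
  have hattain : F (-β * s₀) s₀ = C + m := by simp [hF, hs₀]
  refine ⟨⟨⟨(-β * s₀, s₀), hattain⟩, ?_⟩, hattain⟩
  rintro _ ⟨⟨t, s⟩, rfl⟩
  show C + m ≤ F t s
  rw [hF]
  linarith [hm s, mul_nonneg hα (sq_nonneg (t + β * s))]

theorem stmt_3_general (g1 g2 g3 r φ : ℝ) (hg1 : 0 < g1) (hdet : 0 < g1 * g3 - g2 ^ 2)
    (hr0 : 0 < r) (hφ0 : 0 ≤ φ) (hφ1 : φ ≤ Real.pi / 2)
    (f : ℝ → ℝ → ℝ)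
    (hf : f = fun t s => (g1 + g3) + g1 * (t + (g2 / g1) * s) ^ 2
      + ((g1 * g3 - g2 ^ 2) / g1) * s ^ 2
      + 2 * r * |Real.cos φ - s * Real.sin φ| * Real.sqrt (g1 * g3 - g2 ^ 2)) :
    (g1 / Real.sqrt (g1 * g3 - g2 ^ 2) < Real.cos φ / (r * (Real.sin φ) ^ 2) →
      (IsLeast (Set.range fun p : ℝ × ℝ => f p.1 p.2)
        ((g1 + g3) + 2 * r * Real.cos φ * Real.sqrt (g1 * g3 - g2 ^ 2)
          - r ^ 2 * (Real.sin φ) ^ 2 * g1) ∧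
      f (-(g2 / g1) * (r * g1 * Real.sin φ / Real.sqrt (g1 * g3 - g2 ^ 2)))
        (r * g1 * Real.sin φ / Real.sqrt (g1 * g3 - g2 ^ 2))
        = (g1 + g3) + 2 * r * Real.cos φ * Real.sqrt (g1 * g3 - g2 ^ 2)
          - r ^ 2 * (Real.sin φ) ^ 2 * g1)) ∧
    (¬ (g1 / Real.sqrt (g1 * g3 - g2 ^ 2) < Real.cos φ / (r * (Real.sin φ) ^ 2)) →
      0 < Real.sin φ →
      (IsLeast (Set.range fun p : ℝ × ℝ => f p.1 p.2)
        ((g1 + g3) + ((g1 * g3 - g2 ^ 2) / g1) * (Real.cos φ / Real.sin φ) ^ 2) ∧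
      f (-(g2 / g1) * (Real.cos φ / Real.sin φ)) (Real.cos φ / Real.sin φ)
        = (g1 + g3) + ((g1 * g3 - g2 ^ 2) / g1) * (Real.cos φ / Real.sin φ) ^ 2)) := by
  have hc0 : 0 ≤ cos φ := cos_nonneg_of_mem_Icc ⟨by linarith [pi_pos], hφ1⟩
  have hD : 0 < √(g1 * g3 - g2 ^ 2) := sqrt_pos.mpr hdet
  have hD2 : g1 * g3 - g2 ^ 2 = √(g1 * g3 - g2 ^ 2) ^ 2 := (sq_sqrt hdet.le).symm
  set c := cos φ
  set σ := sin φ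
  set D := √(g1 * g3 - g2 ^ 2)
  rw [hD2]
  have hF : ∀ t s, f t s = (g1 + g3) + g1 * (t + g2 / g1 * s) ^ 2
      + (D ^ 2 / g1 * s ^ 2 + 2 * r * D * |c - s * σ|) := by
    intro t s; rw [hf, ← hD2]; ring
  have ha : 0 < D ^ 2 / g1 := by positivity
  have hb : 0 ≤ 2 * r * D := by positivity
  constructor
  · intro hcond
    have hσ : σ ≠ 0 := by
      intro hσ
      rw [hσ, zero_pow two_ne_zero, mul_zero, div_zero] at hcond
      exact hcond.not_gt (div_pos hg1 hD)
    have hcond' : r * g1 * σ ^ 2 < c * D := by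
      rw [div_lt_div_iff₀ hD (by positivity)] at hcond; linarith
    have hvalue : 2 * r * D * c - (2 * r * D) ^ 2 * σ ^ 2 / (4 * (D ^ 2 / g1))
        = 2 * r * c * D - r ^ 2 * σ ^ 2 * g1 := by
      field_simp; ring
    rw [add_sub_assoc, ← hvalue]
    refine isLeast_range_of_eq_add_sq hF hg1.le
      (vertex_value_le_mul_sq_add_mul_abs ha hb) (mul_sq_add_mul_abs_of_vertex ha.ne' ?_ ?_)
    · field_simp
    · rw [div_mul_eq_mul_div, div_le_iff₀ hD]; linarith
  · intro hcond hσ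
    have hcond' : c * D ≤ r * g1 * σ ^ 2 := by
      rw [not_lt, div_le_div_iff₀ (by positivity) hD] at hcond; linarith
    have hkink : |2 * (D ^ 2 / g1) * c| ≤ 2 * r * D * σ ^ 2 := by
      rw [abs_of_nonneg (by positivity)]
      calc 2 * (D ^ 2 / g1) * c = 2 * D * (c * D) / g1 := by ring
        _ ≤ 2 * D * (r * g1 * σ ^ 2) / g1 := by gcongr
        _ = 2 * r * D * σ ^ 2 := by field_simp
    exact isLeast_range_of_eq_add_sq hF hg1.le
      (kink_value_le_mul_sq_add_mul_abs ha.le hσ hkink) (mul_sq_add_mul_abs_at_kink hσ.ne')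

/-- Minimization of the weighted error function appearing in the computation of the
Holevo bound for a two-parameter qubit submodel. -/
theorem stmt_3 (g1 g2 g3 r φ : ℝ) (hg1 : 0 < g1) (hdet : 0 < g1 * g3 - g2 ^ 2)
    (hr0 : 0 < r) (hr1 : r < 1) (hφ0 : 0 ≤ φ) (hφ1 : φ ≤ Real.pi / 2)
    (f : ℝ → ℝ → ℝ)
    (hf : f = fun t s => (g1 + g3) + g1 * (t + (g2 / g1) * s) ^ 2
      + ((g1 * g3 - g2 ^ 2) / g1) * s ^ 2
      + 2 * r * |Real.cos φ - s * Real.sin φ| * Real.sqrt (g1 * g3 - g2 ^ 2)) :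
    (g1 / Real.sqrt (g1 * g3 - g2 ^ 2) < Real.cos φ / (r * (Real.sin φ) ^ 2) →
      (IsLeast (Set.range fun p : ℝ × ℝ => f p.1 p.2)
        ((g1 + g3) + 2 * r * Real.cos φ * Real.sqrt (g1 * g3 - g2 ^ 2)
          - r ^ 2 * (Real.sin φ) ^ 2 * g1) ∧
      f (-(g2 / g1) * (r * g1 * Real.sin φ / Real.sqrt (g1 * g3 - g2 ^ 2)))
        (r * g1 * Real.sin φ / Real.sqrt (g1 * g3 - g2 ^ 2))
        = (g1 + g3) + 2 * r * Real.cos φ * Real.sqrt (g1 * g3 - g2 ^ 2)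
          - r ^ 2 * (Real.sin φ) ^ 2 * g1)) ∧
    (¬ (g1 / Real.sqrt (g1 * g3 - g2 ^ 2) < Real.cos φ / (r * (Real.sin φ) ^ 2)) →
      0 < Real.sin φ →
      (IsLeast (Set.range fun p : ℝ × ℝ => f p.1 p.2)
        ((g1 + g3) + ((g1 * g3 - g2 ^ 2) / g1) * (Real.cos φ / Real.sin φ) ^ 2) ∧
      f (-(g2 / g1) * (Real.cos φ / Real.sin φ)) (Real.cos φ / Real.sin φ)
        = (g1 + g3) + ((g1 * g3 - g2 ^ 2) / g1) * (Real.cos φ / Real.sin φ) ^ 2)) :=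
  stmt_3_general g1 g2 g3 r φ hg1 hdet hr0 hφ0 hφ1 f hf
end

section
/- For fixed α ∈ ℂ and fixed k ∈ ℕ, the quantity √(C(2j,k)) · (α/√(2j))^k · (1 − |α|²/(2j))^{(2j−k)/2} converges to e^{−|α|²/2} · α^k/√(k!) as j → ∞, where j ranges over half-integers with 2j ∈ ℕ and 2j ≥ k. -/
open Filter Topology


/-- Coordinatewise convergence of spin coherent state coefficients to Glauber
coherent state coefficients: for fixed `α ∈ ℂ` and `k ∈ ℕ`,
`√C(m,k) · (α/√m)^k · (1 − |α|²/m)^{(m−k)/2} → e^{−|α|²/2} α^k/√(k!)` as `m → ∞`. -/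
theorem stmt_7 (α : ℂ) (k : ℕ) :
    Filter.Tendsto
      (fun m : ℕ =>
        ((Real.sqrt (Nat.choose m k) : ℝ) : ℂ) * (α / ((Real.sqrt m : ℝ) : ℂ)) ^ k *
          ((((1 - ‖α‖ ^ 2 / m : ℝ) ^ (((m : ℝ) - k) / 2) : ℝ)) : ℂ))
      Filter.atTop
      (nhds (Complex.exp (-((‖α‖ : ℂ) ^ 2) / 2) * α ^ k
        / ((Real.sqrt (Nat.factorial k) : ℝ) : ℂ))) := by
  set a : ℝ := ‖α‖ ^ 2 with ha
  have ha0 : 0 ≤ a := sq_nonneg _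
  -- a/m → 0
  have hdiv : Tendsto (fun m : ℕ => a / (m : ℝ)) atTop (𝓝 0) :=
    tendsto_const_div_atTop_nhds_zero_nat a
  have hone : Tendsto (fun m : ℕ => 1 - a / (m : ℝ)) atTop (𝓝 1) := by
    simpa using tendsto_const_nhds.sub hdiv
  -- descFactorial / m^k → 1
  have hB : Tendsto (fun m : ℕ => (m.descFactorial k : ℝ) / (m : ℝ) ^ k) atTop (𝓝 1) := by
    have heq : ∀ᶠ m : ℕ in atTop,
        (∏ i ∈ Finset.range k, (1 - (i : ℝ) / (m : ℝ)))
          = (m.descFactorial k : ℝ) / (m : ℝ) ^ k := by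
      filter_upwards [eventually_ge_atTop k, eventually_gt_atTop 0] with m hm hm0
      have hm0' : (m : ℝ) ≠ 0 := Nat.cast_ne_zero.2 hm0.ne'
      rw [Nat.descFactorial_eq_prod_range, Nat.cast_prod]
      rw [show ((m : ℝ)) ^ k = ∏ _i ∈ Finset.range k, (m : ℝ) by
        rw [Finset.prod_const, Finset.card_range]]
      rw [← Finset.prod_div_distrib]
      refine Finset.prod_congr rfl fun i hi => ?_
      have hik : i ≤ m := le_trans (Finset.mem_range.1 hi).le hm
      rw [Nat.cast_sub hik]
      field_simp
    refine Tendsto.congr' heq ?_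
    have : Tendsto (fun m : ℕ => ∏ i ∈ Finset.range k, (1 - (i : ℝ) / (m : ℝ))) atTop
        (𝓝 (∏ i ∈ Finset.range k, (1 : ℝ))) := by
      refine tendsto_finset_prod _ fun i _ => ?_
      simpa using tendsto_const_nhds.sub (tendsto_const_div_atTop_nhds_zero_nat (i : ℝ))
    simpa using this
  -- choose / m^k → 1/k!
  have hC : Tendsto (fun m : ℕ => (m.choose k : ℝ) / (m : ℝ) ^ k) atTop
      (𝓝 (1 / (k.factorial : ℝ))) := by
    have hk : (k.factorial : ℝ) ≠ 0 := Nat.cast_ne_zero.2 k.factorial_ne_zero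
    have := hB.div_const (k.factorial : ℝ)
    refine Tendsto.congr (fun m => ?_) (by simpa [div_div] using this)
    have : (m.descFactorial k : ℝ) = (k.factorial : ℝ) * (m.choose k : ℝ) := by
      rw_mod_cast [Nat.descFactorial_eq_factorial_mul_choose]
    rw [this, mul_comm ((m:ℝ)^k) _]
    exact mul_div_mul_left _ _ hk
  -- sqrt part
  have hS : Tendsto (fun m : ℕ => Real.sqrt ((m.choose k : ℝ) / (m : ℝ) ^ k)) atTop
      (𝓝 (Real.sqrt (1 / (k.factorial : ℝ)))) :=
    (Real.continuous_sqrt.continuousAt.tendsto).comp hC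
  -- exponential part
  have hlog0 : Tendsto (fun m : ℕ => Real.log (1 - a / (m : ℝ))) atTop (𝓝 0) := by
    have := (Real.continuousAt_log one_ne_zero).tendsto.comp hone
    simpa [Function.comp_def] using this
  have hlog1 : Tendsto (fun m : ℕ => (m : ℝ) * Real.log (1 - a / (m : ℝ))) atTop (𝓝 (-a)) := by
    have := (Real.tendsto_mul_log_one_add_div_atTop (-a)).comp tendsto_natCast_atTop_atTop
    refine this.congr fun m => ?_
    simp [Function.comp, neg_div, sub_eq_add_neg]
  have hinner : Tendsto (fun m : ℕ => Real.log (1 - a / (m : ℝ)) * (((m : ℝ) - k) / 2)) atTop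
      (𝓝 (-a / 2)) := by
    have h1 := (hlog1.div_const 2).sub (hlog0.const_mul ((k : ℝ) / 2))
    have h2 : -a / 2 - (k : ℝ) / 2 * 0 = -a / 2 := by ring
    rw [← h2]
    refine h1.congr fun m => ?_
    ring
  have hA : Tendsto (fun m : ℕ => (1 - a / (m : ℝ)) ^ (((m : ℝ) - k) / 2)) atTop
      (𝓝 (Real.exp (-a / 2))) := by
    have hev : ∀ᶠ m : ℕ in atTop,
        Real.exp (Real.log (1 - a / (m : ℝ)) * (((m : ℝ) - k) / 2))
          = (1 - a / (m : ℝ)) ^ (((m : ℝ) - k) / 2) := by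
      have : ∀ᶠ m : ℕ in atTop, a / (m : ℝ) < 1 := hdiv.eventually (eventually_lt_nhds one_pos)
      filter_upwards [this] with m hm
      rw [Real.rpow_def_of_pos (by linarith)]
    exact Tendsto.congr' hev ((Real.continuous_exp.tendsto _).comp hinner)
  -- combined real limit
  have hR : Tendsto (fun m : ℕ =>
      Real.sqrt ((m.choose k : ℝ) / (m : ℝ) ^ k) * (1 - a / (m : ℝ)) ^ (((m : ℝ) - k) / 2))
      atTop (𝓝 (Real.sqrt (1 / (k.factorial : ℝ)) * Real.exp (-a / 2))) := hS.mul hA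
  -- lift to ℂ and multiply by α^k
  have hfinal : Tendsto (fun m : ℕ => α ^ k *
      ((Real.sqrt ((m.choose k : ℝ) / (m : ℝ) ^ k) *
        (1 - a / (m : ℝ)) ^ (((m : ℝ) - k) / 2) : ℝ) : ℂ)) atTop
      (𝓝 (α ^ k * ((Real.sqrt (1 / (k.factorial : ℝ)) * Real.exp (-a / 2) : ℝ) : ℂ))) :=
    ((Complex.continuous_ofReal.tendsto _).comp hR).const_mul _
  have hval : Complex.exp (-((‖α‖ : ℂ) ^ 2) / 2) * α ^ k
      / ((Real.sqrt (Nat.factorial k) : ℝ) : ℂ)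
      = α ^ k * ((Real.sqrt (1 / (k.factorial : ℝ)) * Real.exp (-a / 2) : ℝ) : ℂ) := by
    have h1 : Complex.exp (-((‖α‖ : ℂ) ^ 2) / 2) = ((Real.exp (-a / 2) : ℝ) : ℂ) := by
      rw [Complex.ofReal_exp]
      congr 1
      push_cast [ha]
      ring
    have h2 : Real.sqrt (1 / (k.factorial : ℝ)) = 1 / Real.sqrt (k.factorial : ℝ) := by
      rw [one_div, one_div, Real.sqrt_inv]
    have hk2 : ((Real.sqrt (k.factorial : ℝ) : ℝ) : ℂ) ≠ 0 := by
      have : (0:ℝ) < Real.sqrt (k.factorial : ℝ) :=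
        Real.sqrt_pos.2 (by exact_mod_cast k.factorial_pos)
      exact_mod_cast this.ne'
    rw [h1, h2]
    push_cast
    field_simp
  rw [hval]
  refine Tendsto.congr' ?_ hfinal
  · filter_upwards [eventually_gt_atTop 0] with m hm
    have hms : (0 : ℝ) < Real.sqrt m := Real.sqrt_pos.2 (by exact_mod_cast hm)
    have hmsC : ((Real.sqrt m : ℝ) : ℂ) ≠ 0 := by exact_mod_cast hms.ne'
    have hsq : Real.sqrt ((m.choose k : ℝ) / (m : ℝ) ^ k)
        = Real.sqrt (m.choose k) / (Real.sqrt m) ^ k := by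
      have hpow : ∀ (x : ℝ) (n : ℕ), 0 ≤ x → Real.sqrt (x ^ n) = (Real.sqrt x) ^ n := by
        intro x n hx
        induction n with
        | zero => simp
        | succ n ih => rw [pow_succ, pow_succ, Real.sqrt_mul (pow_nonneg hx n), ih]
      rw [Real.sqrt_div (Nat.cast_nonneg _), hpow _ _ (Nat.cast_nonneg m)]
    rw [hsq]
    rw [div_pow]
    push_cast
    field_simp
end

section
/- For even n, the combinatorial sum Σ over j ∈ {0,1,…,n/2} of (1/2ⁿ)·(C(n, n/2 − j) − C(n, n/2 − j − 1))·(2j+1)·(2j/n)² equals (1/n²)·(3n − (8n+4)·C(n, n/2)/2^{n+1} + 2), where C(n,k) denotes the binomial coefficient and C(n,−1) := 0. -/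
open Finset

private lemma keyA (n M : ℕ) (h : M + 1 ≤ n) :
    ((n.choose (M + 2) : ℤ)) * (M + 2) = (n.choose (M + 1) : ℤ) * ((n : ℤ) - (M + 1)) := by
  have := Nat.choose_succ_right_eq n (M + 1)
  have hc : ((n.choose (M + 2) * (M + 2) : ℕ) : ℤ) = ((n.choose (M + 1) * (n - (M + 1)) : ℕ) : ℤ) := by
    exact_mod_cast congrArg (Nat.cast : ℕ → ℤ) this
  push_cast [Nat.cast_sub h] at hc
  linarith [hc]

private lemma lemA (n : ℕ) : ∀ M : ℕ, M + 1 ≤ n →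
    (∑ k ∈ range (M + 1), (n.choose k : ℤ) * ((n : ℤ) - 2 * k)) =
      (M + 1) * (n.choose (M + 1) : ℤ) := by
  intro M
  induction M with
  | zero =>
    intro h
    simp [Nat.choose_one_right]
  | succ M ih =>
    intro h
    rw [Finset.sum_range_succ, ih (by omega)]
    have key := keyA n M (by omega)
    push_cast
    linear_combination -key

private lemma lemB (n : ℕ) : ∀ M : ℕ, M + 1 ≤ n →
    (∑ k ∈ range (M + 1), (n.choose k : ℤ) * ((n : ℤ) - 2 * k) ^ 2) =
      (n : ℤ) * (∑ k ∈ range (M + 1), (n.choose k : ℤ))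
        + (M + 1) * ((n : ℤ) - 2 * M - 1) * (n.choose (M + 1) : ℤ) := by
  intro M
  induction M with
  | zero =>
    intro h
    simp [Finset.sum_range_one, Nat.choose_one_right]
    ring
  | succ M ih =>
    intro h
    rw [Finset.sum_range_succ, ih (by omega),
      Finset.sum_range_succ (fun k => (n.choose k : ℤ)) (M + 1)]
    have key := keyA n M (by omega)
    have e : M + 1 + 1 = M + 2 := rfl
    rw [e]
    push_cast
    linear_combination (2 * (M : ℤ) + 3 - n) * key

private lemma lemS (m : ℕ) :
    2 * (∑ k ∈ range m, (2 * m).choose k) + (2 * m).choose m = 4 ^ m := by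
  have h1 := Nat.sum_range_choose_halfway m
  have e1 : (∑ i ∈ range (m + 1), (2 * m + 1).choose i) =
      (∑ i ∈ range m, (2 * m).choose i) + (∑ i ∈ range (m + 1), (2 * m).choose i) := by
    rw [Finset.sum_range_succ' (fun i => (2 * m + 1).choose i) m,
        Finset.sum_range_succ' (fun i => (2 * m).choose i) m]
    simp only [Nat.choose_succ_succ, Nat.choose_zero_right]
    rw [Finset.sum_add_distrib]
    ring
  rw [e1, Finset.sum_range_succ] at h1
  omega

private lemma lemT (m : ℕ) (hm : 1 ≤ m) :
    (∑ k ∈ range (m + 1),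
        (((2 * m).choose k : ℤ) - (if 0 < k then ((2 * m).choose (k - 1) : ℤ) else 0))
          * (2 * ((m : ℤ) - k) + 1) * (2 * ((m : ℤ) - k)) ^ 2) =
      2 ^ (2 * m) * (6 * m + 2) - (8 * m + 2) * ((2 * m).choose m : ℤ) := by
  -- split into two sums
  have split : (∑ k ∈ range (m + 1),
        (((2 * m).choose k : ℤ) - (if 0 < k then ((2 * m).choose (k - 1) : ℤ) else 0))
          * (2 * ((m : ℤ) - k) + 1) * (2 * ((m : ℤ) - k)) ^ 2) =
      (∑ k ∈ range (m + 1), ((2 * m).choose k : ℤ)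
          * ((2 * ((m : ℤ) - k) + 1) * (2 * ((m : ℤ) - k)) ^ 2))
      - (∑ k ∈ range (m + 1), (if 0 < k then ((2 * m).choose (k - 1) : ℤ) else 0)
          * ((2 * ((m : ℤ) - k) + 1) * (2 * ((m : ℤ) - k)) ^ 2)) := by
    rw [← Finset.sum_sub_distrib]
    apply Finset.sum_congr rfl
    intro k _
    ring
  rw [split]
  -- the shifted sum
  have shift : (∑ k ∈ range (m + 1), (if 0 < k then ((2 * m).choose (k - 1) : ℤ) else 0)
          * ((2 * ((m : ℤ) - k) + 1) * (2 * ((m : ℤ) - k)) ^ 2)) =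
      ∑ k ∈ range m, ((2 * m).choose k : ℤ)
          * ((2 * ((m : ℤ) - (k + 1)) + 1) * (2 * ((m : ℤ) - (k + 1))) ^ 2) := by
    rw [Finset.sum_range_succ' (fun k => (if 0 < k then ((2 * m).choose (k - 1) : ℤ) else 0)
          * ((2 * ((m : ℤ) - k) + 1) * (2 * ((m : ℤ) - k)) ^ 2)) m]
    simp only [Nat.succ_sub_one, if_pos (Nat.succ_pos _), if_neg (lt_irrefl 0), zero_mul,
      mul_zero, add_zero, Nat.cast_zero]
    apply Finset.sum_congr rfl
    intro k _
    push_cast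
    ring
  rw [shift, Finset.sum_range_succ]
  -- the top term vanishes
  have htop : ((2 * m).choose m : ℤ) * ((2 * ((m : ℤ) - m) + 1) * (2 * ((m : ℤ) - m)) ^ 2) = 0 := by
    ring_nf
  rw [htop, add_zero, ← Finset.sum_sub_distrib]
  -- combine termwise: difference is 6*(n-2k)^2 - 8*(n-2k) + 4 times choose
  have expand : 6 * (∑ k ∈ range m, ((2 * m).choose k : ℤ) * ((2 * m : ℤ) - 2 * k) ^ 2)
      - 8 * (∑ k ∈ range m, ((2 * m).choose k : ℤ) * ((2 * m : ℤ) - 2 * k))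
      + 4 * (∑ k ∈ range m, ((2 * m).choose k : ℤ)) =
      ∑ k ∈ range m, (((2 * m).choose k : ℤ)
          * ((2 * ((m : ℤ) - k) + 1) * (2 * ((m : ℤ) - k)) ^ 2)
        - ((2 * m).choose k : ℤ)
          * ((2 * ((m : ℤ) - (k + 1)) + 1) * (2 * ((m : ℤ) - (k + 1))) ^ 2)) := by
    rw [Finset.mul_sum, Finset.mul_sum, Finset.mul_sum, ← Finset.sum_sub_distrib,
      ← Finset.sum_add_distrib]
    apply Finset.sum_congr rfl
    intro k _
    -- (cast already normalized)
    ring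
  rw [← expand]
  obtain ⟨M, rfl⟩ : ∃ M, m = M + 1 := ⟨m - 1, by omega⟩
  have hA := lemA (2 * (M + 1)) M (by omega)
  have hB := lemB (2 * (M + 1)) M (by omega)
  have hS := lemS (M + 1)
  have hS' : 2 * (∑ k ∈ range (M + 1), ((2 * (M + 1)).choose k : ℤ))
      + ((2 * (M + 1)).choose (M + 1) : ℤ) = 4 ^ (M + 1) := by exact_mod_cast hS
  have h2 : ((2 * (M + 1) : ℕ) : ℤ) = 2 * ((M : ℤ) + 1) := by push_cast; ring
  rw [h2] at hA hB
  have h4 : (4 : ℤ) ^ (M + 1) = 2 ^ (2 * (M + 1)) := by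
    rw [pow_mul]; norm_num
  rw [h4] at hS'
  push_cast
  linear_combination 6 * hB - 8 * hA + (6 * (M : ℤ) + 8) * hS'

/-- Combinatorial identity for the second moment of `2j/n` under the distribution
`P_{n,0}` (with `n = 2m` even):
`∑_{j=0}^{m} 2⁻ⁿ (C(n, m−j) − C(n, m−j−1)) (2j+1) (2j/n)²
  = n⁻²(3n − (8n+4) C(n,m)/2^{n+1} + 2)`. -/
theorem stmt_12 (m : ℕ) (hm : 1 ≤ m) :
    ∑ j ∈ Finset.range (m + 1),
      (1 / (2 : ℝ) ^ (2 * m))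
        * ((Nat.choose (2 * m) (m - j) : ℝ)
          - (if j < m then (Nat.choose (2 * m) (m - j - 1) : ℝ) else 0))
        * (2 * (j : ℝ) + 1) * ((2 * (j : ℝ)) / (2 * (m : ℝ))) ^ 2
    = (1 / (2 * (m : ℝ)) ^ 2)
      * (3 * (2 * (m : ℝ))
        - (8 * (2 * (m : ℝ)) + 4) * (Nat.choose (2 * m) m : ℝ) / 2 ^ (2 * m + 1)
        + 2) := by
  have hm0 : (m : ℝ) ≠ 0 := Nat.cast_ne_zero.mpr (by omega)
  set F : ℕ → ℝ := fun k =>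
    (1 / (2 : ℝ) ^ (2 * m))
      * ((Nat.choose (2 * m) k : ℝ)
        - (if 0 < k then (Nat.choose (2 * m) (k - 1) : ℝ) else 0))
      * (2 * ((m : ℝ) - k) + 1) * ((2 * ((m : ℝ) - k)) / (2 * (m : ℝ))) ^ 2 with hF
  have h1 : (∑ j ∈ Finset.range (m + 1),
      (1 / (2 : ℝ) ^ (2 * m))
        * ((Nat.choose (2 * m) (m - j) : ℝ)
          - (if j < m then (Nat.choose (2 * m) (m - j - 1) : ℝ) else 0))
        * (2 * (j : ℝ) + 1) * ((2 * (j : ℝ)) / (2 * (m : ℝ))) ^ 2)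
      = ∑ k ∈ Finset.range (m + 1), F k := by
    rw [← Finset.sum_range_reflect F (m + 1)]
    apply Finset.sum_congr rfl
    intro j hj
    have hj' : j ≤ m := by
      have := Finset.mem_range.mp hj; omega
    simp only [hF, Nat.add_sub_cancel]
    have hcast : ((m - j : ℕ) : ℝ) = (m : ℝ) - (j : ℝ) := by
      push_cast [Nat.cast_sub hj']; ring
    by_cases hlt : j < m
    · rw [if_pos hlt, if_pos (show 0 < m - j by omega), hcast]
      ring
    · rw [if_neg hlt, if_neg (show ¬ 0 < m - j by omega), hcast]
      ring
  rw [h1]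
  have hT := lemT m hm
  have h2 : (∑ k ∈ Finset.range (m + 1), F k)
      = (1 / ((2 : ℝ) ^ (2 * m) * (2 * (m : ℝ)) ^ 2))
        * ((∑ k ∈ range (m + 1),
            (((2 * m).choose k : ℤ) - (if 0 < k then ((2 * m).choose (k - 1) : ℤ) else 0))
              * (2 * ((m : ℤ) - k) + 1) * (2 * ((m : ℤ) - k)) ^ 2 : ℤ) : ℝ) := by
    have h2m : (2 : ℝ) ^ (2 * m) ≠ 0 := by positivity
    rw [Int.cast_sum, Finset.mul_sum]
    apply Finset.sum_congr rfl
    intro k _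
    by_cases hk : 0 < k
    · simp only [hF, if_pos hk]
      push_cast
      field_simp
    · simp only [hF, if_neg hk]
      push_cast
      field_simp
  rw [h2, hT]
  push_cast
  have h2m : (2 : ℝ) ^ (2 * m) ≠ 0 := by positivity
  field_simp
  ring
end

section
/- Let A = diag(a,b,c) with a ≥ b ≥ c > 0 and let B be a 3×3 real antisymmetric matrix such that A + iB is positive semidefinite (as a Hermitian matrix). Then tr|iB| ≤ 2√(ab), and consequently (tr√A)² − (tr A + tr|iB|) ≥ 2(√(bc) + √(ca)) > 0, where tr|iB| is the sum of absolute values of eigenvalues of the Hermitian matrix iB. -/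
/-!
Since `B` is antisymmetric, so is `M = iB`; hence `tr M = 0` and, the dimension being odd,
`det M = 0`. The eigenvalues of `M` are therefore `0, t, -t`, and
`(tr|M|)² = 2 tr M² = 2 ∑ Bᵢⱼ² = 4 (p² + q² + r²)`, where `p, q, r` are the entries of `B` above
the diagonal. Positivity of `A + iB` gives `det (A + iB) = abc - ar² - bq² - cp² ≥ 0`, which for
`c ≤ b ≤ a` forces `p² + q² + r² ≤ ab`. The remaining claims follow from
`(√a + √b + √c)² = tr A + 2 (√(ab) + √(bc) + √(ca))`.
-/

open ComplexOrder

lemma sq_abs_add_abs_add_abs_of_add_eq_zero_of_mul_eq_zero {x y z : ℝ} (hsum : x + y + z = 0)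
    (hprod : x * y * z = 0) : (|x| + |y| + |z|) ^ 2 = 2 * (x ^ 2 + y ^ 2 + z ^ 2) := by
  rcases mul_eq_zero.mp hprod with hxy | rfl
  · rcases mul_eq_zero.mp hxy with rfl | rfl
    · obtain rfl : z = -y := by linarith
      rw [abs_zero, abs_neg, neg_sq, ← sq_abs y]; ring
    · obtain rfl : z = -x := by linarith
      rw [abs_zero, abs_neg, neg_sq, ← sq_abs x]; ring
  · obtain rfl : y = -x := by linarith
    rw [abs_zero, abs_neg, neg_sq, ← sq_abs x]; ring

lemma sq_add_sq_add_sq_le_mul {a b c p q r : ℝ} (hab : b ≤ a) (hbc : c ≤ b) (hc : 0 < c)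
    (h : 0 ≤ a * b * c - a * r ^ 2 - b * q ^ 2 - c * p ^ 2) : p ^ 2 + q ^ 2 + r ^ 2 ≤ a * b := by
  -- c (p² + q² + r²) ≤ c p² + b q² + a r² ≤ a b c
  refine le_of_mul_le_mul_left ?_ hc
  nlinarith [mul_le_mul_of_nonneg_right hbc (sq_nonneg q),
    mul_le_mul_of_nonneg_right (hbc.trans hab) (sq_nonneg r)]

lemma sq_sqrt_add_sqrt_add_sqrt {a b c : ℝ} (ha : 0 ≤ a) (hb : 0 ≤ b) (hc : 0 ≤ c) :
    (√a + √b + √c) ^ 2 = a + b + c + 2 * (√(a * b) + √(b * c) + √(c * a)) := by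
  rw [Real.sqrt_mul ha, Real.sqrt_mul hb, Real.sqrt_mul hc]
  linear_combination Real.sq_sqrt ha + Real.sq_sqrt hb + Real.sq_sqrt hc

namespace Matrix

section Hermitian

variable {𝕜 n : Type*} [RCLike 𝕜] [Fintype n] [DecidableEq n]

lemma IsHermitian.trace_mul_self_eq_sum_sq_eigenvalues {A : Matrix n n 𝕜} (hA : A.IsHermitian) :
    (A * A).trace = ∑ i, (hA.eigenvalues i : 𝕜) ^ 2 := by
  conv_lhs => rw [hA.spectral_theorem, ← map_mul, Unitary.conjStarAlgAut_apply, trace_mul_cycle,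
    Unitary.coe_star_mul_self, one_mul, diagonal_mul_diagonal, trace_diagonal]
  simp [sq]

lemma IsHermitian.sq_sum_abs_eigenvalues_of_trace_eq_zero_of_det_eq_zero
    {A : Matrix (Fin 3) (Fin 3) 𝕜} (hA : A.IsHermitian) (htr : A.trace = 0) (hdet : A.det = 0) :
    (∑ i, |hA.eigenvalues i|) ^ 2 = 2 * RCLike.re (A * A).trace := by
  rw [hA.trace_eq_sum_eigenvalues, Fin.sum_univ_three] at htr
  rw [hA.det_eq_prod_eigenvalues, Fin.prod_univ_three] at hdet
  rw [hA.trace_mul_self_eq_sum_sq_eigenvalues, Fin.sum_univ_three, Fin.sum_univ_three]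
  norm_cast at htr hdet ⊢
  exact sq_abs_add_abs_add_abs_of_add_eq_zero_of_mul_eq_zero htr hdet

end Hermitian

section Antisymmetric

variable {n R : Type*}

lemma trace_eq_zero_of_transpose_eq_neg [Fintype n] [Ring R] [NoZeroDivisors R] [CharZero R]
    {B : Matrix n n R} (hB : Bᵀ = -B) : B.trace = 0 :=
  self_eq_neg.mp (by rw [← trace_neg, ← hB, trace_transpose])

lemma det_eq_zero_of_transpose_eq_neg [Fintype n] [DecidableEq n] [CommRing R]
    [NoZeroDivisors R] [CharZero R] {B : Matrix n n R} (hB : Bᵀ = -B)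
    (hn : Odd (Fintype.card n)) : B.det = 0 :=
  self_eq_neg.mp (by conv_lhs => rw [← det_transpose, hB, det_neg, hn.neg_one_pow, neg_one_mul])

lemma trace_mul_self_of_transpose_eq_neg [Fintype n] [CommRing R] {B : Matrix n n R}
    (hB : Bᵀ = -B) : (B * B).trace = -∑ i, ∑ j, B i j ^ 2 := by
  have hBji (i j : n) : B j i = -B i j := by simpa using congrFun (congrFun hB i) j
  simp only [trace, diag_apply, mul_apply, ← Finset.sum_neg_distrib]
  refine Finset.sum_congr rfl fun i _ => Finset.sum_congr rfl fun j _ => ?_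
  rw [hBji i j]
  ring

lemma transpose_I_smul_map_ofReal {B : Matrix n n ℝ} (hB : Bᵀ = -B) :
    (Complex.I • B.map ((↑) : ℝ → ℂ))ᵀ = -(Complex.I • B.map ((↑) : ℝ → ℂ)) := by
  rw [transpose_smul, ← transpose_map, hB, Matrix.map_neg _ Complex.ofReal_neg, smul_neg]

lemma trace_mul_self_I_smul_map_ofReal [Fintype n] {B : Matrix n n ℝ} (hB : Bᵀ = -B) :
    ((Complex.I • B.map ((↑) : ℝ → ℂ)) * (Complex.I • B.map ((↑) : ℝ → ℂ))).trace =
      ↑(∑ i, ∑ j, B i j ^ 2) := by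
  rw [trace_mul_self_of_transpose_eq_neg (transpose_I_smul_map_ofReal hB)]
  simp [mul_pow]

lemma eq_of_transpose_eq_neg_fin_three [Ring R] [NoZeroDivisors R] [CharZero R]
    {B : Matrix (Fin 3) (Fin 3) R} (hB : Bᵀ = -B) :
    B = !![0, B 0 1, B 0 2; -B 0 1, 0, B 1 2; -B 0 2, -B 1 2, 0] := by
  have hBji (i j : Fin 3) : B j i = -B i j := by simpa using congrFun (congrFun hB i) j
  ext i j
  fin_cases i <;> fin_cases j <;> simp <;>
    first | exact hBji _ _ | exact self_eq_neg.mp (hBji _ _)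

lemma sum_sq_fin_three_of_transpose_eq_neg [CommRing R] [NoZeroDivisors R] [CharZero R]
    {B : Matrix (Fin 3) (Fin 3) R} (hB : Bᵀ = -B) :
    ∑ i, ∑ j, B i j ^ 2 = 2 * (B 0 1 ^ 2 + B 0 2 ^ 2 + B 1 2 ^ 2) := by
  rw [eq_of_transpose_eq_neg_fin_three hB]
  simp [Fin.sum_univ_three]
  ring

lemma det_diagonal_add_I_smul_fin_three (a b c : ℝ) {B : Matrix (Fin 3) (Fin 3) ℝ}
    (hB : Bᵀ = -B) :
    ((diagonal ![a, b, c]).map ((↑) : ℝ → ℂ) + Complex.I • B.map ((↑) : ℝ → ℂ)).det =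
      ↑(a * b * c - a * B 1 2 ^ 2 - b * B 0 2 ^ 2 - c * B 0 1 ^ 2) := by
  rw [eq_of_transpose_eq_neg_fin_three hB]
  simp [det_fin_three]
  linear_combination (a * B 1 2 ^ 2 + b * B 0 2 ^ 2 + c * B 0 1 ^ 2 : ℂ) * Complex.I_sq

end Antisymmetric

end Matrix

/-- Strict gap between the quasi-classical bound and the RLD bound: if
`A = diag(a,b,c)` with `a ≥ b ≥ c > 0` and `B` is real antisymmetric with
`A + iB ≥ 0`, then `tr|iB| ≤ 2√(ab)` and
`(tr√A)² − (tr A + tr|iB|) ≥ 2(√(bc) + √(ca)) > 0`. -/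
theorem stmt_18 (a b c : ℝ) (hab : b ≤ a) (hbc : c ≤ b) (hc : 0 < c)
    (B : Matrix (Fin 3) (Fin 3) ℝ) (hB : B.transpose = -B)
    (hH : (Complex.I • (B.map (fun x => (x : ℂ)))).IsHermitian)
    (hPSD : (((Matrix.diagonal ![a, b, c]).map (fun x => (x : ℂ)))
        + Complex.I • (B.map (fun x => (x : ℂ)))).PosSemidef) :
    (∑ i, |hH.eigenvalues i|) ≤ 2 * Real.sqrt (a * b) ∧
    2 * (Real.sqrt (b * c) + Real.sqrt (c * a))
      ≤ (Real.sqrt a + Real.sqrt b + Real.sqrt c) ^ 2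
        - ((a + b + c) + ∑ i, |hH.eigenvalues i|) ∧
    0 < 2 * (Real.sqrt (b * c) + Real.sqrt (c * a)) := by
  have hb : 0 < b := hc.trans_le hbc
  have ha : 0 < a := hb.trans_le hab
  have hM := Matrix.transpose_I_smul_map_ofReal hB
  have hsq := hH.sq_sum_abs_eigenvalues_of_trace_eq_zero_of_det_eq_zero
    (Matrix.trace_eq_zero_of_transpose_eq_neg hM)
    (Matrix.det_eq_zero_of_transpose_eq_neg hM (by decide))
  rw [Matrix.trace_mul_self_I_smul_map_ofReal hB, RCLike.re_to_complex, Complex.ofReal_re,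
    Matrix.sum_sq_fin_three_of_transpose_eq_neg hB] at hsq
  have hdet := hPSD.det_nonneg
  rw [Matrix.det_diagonal_add_I_smul_fin_three a b c hB, Complex.zero_le_real] at hdet
  have hbound := sq_add_sq_add_sq_le_mul hab hbc hc hdet
  have htrace : ∑ i, |hH.eigenvalues i| ≤ 2 * √(a * b) := by
    refine (pow_le_pow_iff_left₀ (by positivity) (by positivity) two_ne_zero).mp ?_
    rw [hsq, mul_pow, Real.sq_sqrt (by positivity)]
    linarith
  refine ⟨htrace, ?_, by positivity⟩
  rw [sq_sqrt_add_sqrt_add_sqrt ha.le hb.le hc.le]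
  linarith
end

section
/- Let N̄ ≥ 0 and let G be a 2×2 real symmetric positive definite matrix. Define the complex Hermitian matrix J̃⁻¹ = [[N̄+1/2, i/2],[−i/2, N̄+1/2]]. Then tr(√G · Re(J̃⁻¹) · √G) + tr|√G · Im(J̃⁻¹) · √G| = (N̄ + 1/2)·tr G + √(det G), where Im(J̃⁻¹) = [[0,1/2],[−1/2,0]] (so that i·Im part gives the Hermitian matrix (1/2)[[0,−i],[i,0]]), and |M| denotes the positive part √(M*M). -/
/-!
Write `T` for the complexification of `S`, so that `T * T = G`, and `M = T E T` with
`E = (i/2)[[0, 1], [-1, 0]]`. Since `G` is symmetric and `E` antisymmetric,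
`tr M = tr(E G) = 0`, while `det M = det G · det E = -det G / 4`. A traceless Hermitian
`2 × 2` matrix has eigenvalues `±√(-det M)`, so `tr|M| = √(det G)`; the first summand is
`(N̄ + 1/2) tr(T T) = (N̄ + 1/2) tr G`.
-/

open Complex Matrix

namespace Matrix

variable {n : Type*} [Fintype n]

theorem trace_mul_eq_zero_of_transpose_eq_neg {R : Type*} [CommRing R] [NoZeroDivisors R]
    [CharZero R] {A B : Matrix n n R} (hA : Aᵀ = -A) (hB : B.IsSymm) : (A * B).trace = 0 := by
  refine CharZero.eq_neg_self_iff.mp ?_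
  calc (A * B).trace = (A * B)ᵀ.trace := (trace_transpose _).symm
    _ = -(A * B).trace := by rw [transpose_mul, hA, hB.eq, mul_neg, trace_neg, trace_mul_comm]

theorem IsHermitian.sum_abs_eigenvalues_fin_two {𝕜 : Type*} [RCLike 𝕜]
    {M : Matrix (Fin 2) (Fin 2) 𝕜} (hM : M.IsHermitian) (htr : M.trace = 0) {d : ℝ}
    (hdet : M.det = d) : ∑ i, |hM.eigenvalues i| = 2 * √(-d) := by
  have hsum : hM.eigenvalues 0 + hM.eigenvalues 1 = 0 := by
    have := hM.trace_eq_sum_eigenvalues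
    rw [htr, Fin.sum_univ_two] at this
    exact_mod_cast this.symm
  have hprod : hM.eigenvalues 0 * hM.eigenvalues 1 = d := by
    have := hM.det_eq_prod_eigenvalues
    rw [hdet, Fin.prod_univ_two] at this
    exact_mod_cast this.symm
  have hneg : hM.eigenvalues 1 = -hM.eigenvalues 0 := by linarith
  have habs : |hM.eigenvalues 0| = √(-d) := by
    rw [← Real.sqrt_sq_eq_abs, ← hprod, hneg]
    ring_nf
  rw [Fin.sum_univ_two, hneg, abs_neg, habs]
  ring

variable {S G : Matrix n n ℝ}

theorem map_ofReal_mul_self (hSS : S * S = G) :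
    S.map ofReal * S.map ofReal = G.map ofReal := by
  rw [← hSS]
  exact (Matrix.map_mul (f := ofRealHom)).symm

theorem trace_map_ofReal_mul_smul_one_mul [DecidableEq n] (hSS : S * S = G) (c : ℂ) :
    (S.map ofReal * (c • 1) * S.map ofReal).trace = c * G.trace := by
  rw [Matrix.mul_smul, mul_one, Matrix.smul_mul, trace_smul, map_ofReal_mul_self hSS, smul_eq_mul]
  exact congrArg _ (AddMonoidHom.map_trace ofRealHom G).symm

theorem det_map_ofReal_mul_mul [DecidableEq n] (hSS : S * S = G) (A : Matrix n n ℂ) :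
    (S.map ofReal * A * S.map ofReal).det = G.det * A.det := by
  rw [det_mul, det_mul, mul_right_comm, ← det_mul, map_ofReal_mul_self hSS]
  exact congrArg (· * A.det) (RingHom.map_det ofRealHom G).symm

theorem trace_map_ofReal_mul_mul_eq_zero (hSS : S * S = G) (hG : G.IsSymm)
    {A : Matrix n n ℂ} (hA : Aᵀ = -A) : (S.map ofReal * A * S.map ofReal).trace = 0 := by
  rw [trace_mul_comm, ← mul_assoc, map_ofReal_mul_self hSS, trace_mul_comm]
  exact trace_mul_eq_zero_of_transpose_eq_neg hA (hG.map _)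

end Matrix

theorem stmt_19_general (N : ℝ) (G S : Matrix (Fin 2) (Fin 2) ℝ)
    (hG : G.PosDef) (hSS : S * S = G)
    (hH : ((S.map (fun x => (x : ℂ)))
        * !![0, Complex.I / 2; -Complex.I / 2, 0]
        * (S.map (fun x => (x : ℂ)))).IsHermitian) :
    ((S.map (fun x => (x : ℂ)))
        * (((N + 1/2 : ℝ) : ℂ) • (1 : Matrix (Fin 2) (Fin 2) ℂ))
        * (S.map (fun x => (x : ℂ)))).trace
      + ((∑ i, |hH.eigenvalues i| : ℝ) : ℂ)
    = (((N + 1/2) * G.trace + Real.sqrt G.det : ℝ) : ℂ) := by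
  have hE : (!![0, I / 2; -I / 2, 0] : Matrix (Fin 2) (Fin 2) ℂ)ᵀ = -!![0, I / 2; -I / 2, 0] := by
    ext i j; fin_cases i <;> fin_cases j <;> simp [neg_div]
  have hdet : (S.map ofReal * !![0, I / 2; -I / 2, 0] * S.map ofReal).det
      = ((-(G.det / 4) : ℝ) : ℂ) := by
    rw [det_map_ofReal_mul_mul hSS, det_fin_two_of]
    push_cast
    linear_combination (G.det / 4 : ℂ) * I_sq
  have htr := trace_map_ofReal_mul_mul_eq_zero hSS (isHermitian_iff_isSymm.mp hG.isHermitian) hE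
  rw [trace_map_ofReal_mul_smul_one_mul hSS,
    hH.sum_abs_eigenvalues_fin_two (d := -(G.det / 4)) htr hdet, neg_neg, Real.sqrt_div' _ (by norm_num : (0 : ℝ) ≤ 4),
    show √(4 : ℝ) = 2 by rw [show (4 : ℝ) = 2 ^ 2 by norm_num, Real.sqrt_sq zero_le_two]]
  push_cast
  ring

/-- The RLD bound of the quantum Gaussian shift model: with `S = √G` (`S² = G`,
`S ≥ 0`), `tr(√G·Re(J̃⁻¹)·√G) + tr|√G·Im(J̃⁻¹)·√G| = (N̄+1/2)·tr G + √(det G)`,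
where `J̃⁻¹ = [[N̄+1/2, i/2],[−i/2, N̄+1/2]]` and `tr|·|` is the sum of the absolute
values of the eigenvalues of the Hermitian matrix `√G·(i/2·E)·√G`. -/
theorem stmt_19 (N : ℝ) (hN : 0 ≤ N) (G S : Matrix (Fin 2) (Fin 2) ℝ)
    (hG : G.PosDef) (hS : S.PosSemidef) (hSS : S * S = G)
    (hH : ((S.map (fun x => (x : ℂ)))
        * !![0, Complex.I / 2; -Complex.I / 2, 0]
        * (S.map (fun x => (x : ℂ)))).IsHermitian) :
    ((S.map (fun x => (x : ℂ)))
        * (((N + 1/2 : ℝ) : ℂ) • (1 : Matrix (Fin 2) (Fin 2) ℂ))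
        * (S.map (fun x => (x : ℂ)))).trace
      + ((∑ i, |hH.eigenvalues i| : ℝ) : ℂ)
    = (((N + 1/2) * G.trace + Real.sqrt G.det : ℝ) : ℂ) :=
  stmt_19_general N G S hG hSS hH
end
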